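/- If G is a finite group without abelian normal subgroups and N is a normal subgroup of G, then the socle of N equals the intersection of the socle of G with N, i.e., Soc(N) = Soc(G) ∩ N. -/

import Mathlib

def IsMinimalNormal {G : Type*} [Group G] (N : Subgroup G) : Prop :=
  N ≠ ⊥ ∧ N.Normal ∧ ∀ M : Subgroup G, M.Normal → M ≤ N → M = ⊥ ∨ M = N

def socle (G : Type*) [Group G] : Subgroup G :=
  ⨆ N ∈ {N : Subgroup G | IsMinimalNormal N}, N

def FittingFree (G : Type*) [Group G] : Prop :=
  ∀ N : Subgroup G, N.Normal → IsMulCommutative N → N = ⊥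

/-!
A minimal normal subgroup `T` of `G` either lies in `N` or meets it trivially, and then
centralizes `N`. In the first case `T` meets the image of `Soc(N)`, a normal subgroup of `G`,
nontrivially, so `T ≤ Soc(N)`. Hence `Soc(G) ≤ Soc(N) ⊔ C_G(N)`, and since `N ∩ C_G(N)` is an
abelian normal subgroup, hence trivial, the modular law gives `Soc(G) ∩ N ≤ Soc(N)`.

Conversely, if a minimal normal subgroup `M` of `N` met `Soc(G)` trivially, it would centralize
every minimal normal subgroup of `G`, hence `Soc(G)`; but `C_G(Soc(G))` is trivial in a
Fitting-free group, as any minimal normal subgroup inside it would be abelian.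
-/

open Subgroup
open scoped Pointwise

section

variable {G : Type*} [Group G]

theorem Subgroup.sup_inf_le_assoc_of_le_of_normal {A B C : Subgroup G} [B.Normal] (h : A ≤ C) :
    (A ⊔ B) ⊓ C ≤ A ⊔ B ⊓ C := by
  rintro x ⟨hxAB, hxC⟩
  replace hxAB : x ∈ (A : Set G) * (B : Set G) := mul_normal A B ▸ hxAB
  obtain ⟨a, ha, b, hb, rfl⟩ := hxAB
  have hbC : b ∈ C := by simpa using mul_mem (inv_mem (h ha)) hxC
  exact mul_mem_sup ha ⟨hb, hbC⟩

theorem Subgroup.le_centralizer_of_disjoint {H K : Subgroup G} (hH : H.Normal) (hK : K.Normal)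
    (hdis : Disjoint H K) : H ≤ centralizer K :=
  fun x hx y hy => (commute_of_normal_of_disjoint H K hH hK hdis x y hx hy).symm.eq

theorem socle_le {K : Subgroup G} (h : ∀ M : Subgroup G, IsMinimalNormal M → M ≤ K) :
    socle G ≤ K :=
  iSup₂_le h

namespace IsMinimalNormal

theorem le_socle {M : Subgroup G} (hM : IsMinimalNormal M) : M ≤ socle G :=
  le_iSup₂ (f := fun (M : Subgroup G) (_ : M ∈ {M : Subgroup G | IsMinimalNormal M}) => M) M hM

theorem disjoint_or_le {T N : Subgroup G} (hT : IsMinimalNormal T) (hN : N.Normal) :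
    Disjoint T N ∨ T ≤ N := by
  rcases hT.2.2 (T ⊓ N) (@normal_inf_normal _ _ T N hT.2.1 hN) inf_le_left with h | h
  · exact Or.inl (disjoint_iff.mpr h)
  · exact Or.inr (h ▸ inf_le_right)

theorem map_mulEquiv {H : Type*} [Group H] {M : Subgroup G} (hM : IsMinimalNormal M)
    (e : G ≃* H) : IsMinimalNormal (M.map e.toMonoidHom) := by
  obtain ⟨hne, hnormal, hmin⟩ := hM
  refine ⟨(map_eq_bot_iff_of_injective M e.injective).not.mpr hne,
    hnormal.map _ e.surjective, fun K hK hKM => ?_⟩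
  have hcomap : K.comap e.toMonoidHom ≤ M := by
    simpa only [comap_map_eq_self_of_injective (f := e.toMonoidHom) e.injective] using
      comap_mono (f := e.toMonoidHom) hKM
  rcases hmin _ (hK.comap _) hcomap with h | h
  · left
    rw [← map_comap_eq_self_of_surjective (f := e.toMonoidHom) e.surjective K, h,
      Subgroup.map_bot]
  · right
    rw [← map_comap_eq_self_of_surjective (f := e.toMonoidHom) e.surjective K, h]

end IsMinimalNormal

instance socle_characteristic : (socle G).Characteristic :=
  characteristic_iff_le_comap.mpr fun φ =>
    socle_le fun _ hM => map_le_iff_le_comap.mp (hM.map_mulEquiv φ).le_socle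

theorem Subgroup.Normal.exists_isMinimalNormal_le [Finite G] {K : Subgroup G} (hK : K.Normal)
    (h : K ≠ ⊥) : ∃ M : Subgroup G, IsMinimalNormal M ∧ M ≤ K := by
  obtain ⟨M, ⟨hMn, hMne, hMK⟩, hmin⟩ :=
    (Set.toFinite {M : Subgroup G | M.Normal ∧ M ≠ ⊥ ∧ M ≤ K}).exists_minimal ⟨K, hK, h, le_rfl⟩
  refine ⟨M, ⟨hMne, hMn, fun M' hM'n hM'M => ?_⟩, hMK⟩
  by_cases hb : M' = ⊥
  · exact Or.inl hb
  · exact Or.inr (le_antisymm hM'M (hmin ⟨hM'n, hb, hM'M.trans hMK⟩ hM'M))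

namespace FittingFree

theorem inf_centralizer_eq_bot (hG : FittingFree G) {N : Subgroup G} (hN : N.Normal) :
    N ⊓ centralizer N = ⊥ :=
  hG _ (@normal_inf_normal _ _ N _ hN (@normal_centralizer _ _ N hN)) <|
    le_centralizer_iff_isMulCommutative.mp <|
      inf_le_right.trans (centralizer_le (SetLike.coe_subset_coe.mpr inf_le_left))

theorem centralizer_socle_eq_bot [Finite G] (hG : FittingFree G) :
    centralizer (socle G : Set G) = ⊥ := by
  by_contra h
  obtain ⟨M, hM, hMC⟩ := (normal_centralizer (H := socle G)).exists_isMinimalNormal_le h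
  have hMle : M ≤ socle G ⊓ centralizer (socle G : Set G) := le_inf hM.le_socle hMC
  exact hM.1 (le_bot_iff.mp (hG.inf_centralizer_eq_bot (N := socle G) inferInstance ▸ hMle))

end FittingFree

theorem IsMinimalNormal.map_subtype_le_socle [Finite G] (hG : FittingFree G) {N : Subgroup G}
    (hN : N.Normal) {M : Subgroup N} (hM : IsMinimalNormal M) : M.map N.subtype ≤ socle G := by
  rcases hM.disjoint_or_le ((normal_of_characteristic (socle G)).subgroupOf N) with hdis | hle
  · exfalso
    -- `M` centralizes each minimal normal `T` of `G`: inside `N` when `T ≤ N`, and since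
    -- `[T, N] ≤ T ∩ N = 1` otherwise.
    have hcent : socle G ≤ centralizer (M.map N.subtype : Set G) := socle_le fun T hT => by
      rcases hT.disjoint_or_le hN with hTN | hTN
      · exact (le_centralizer_of_disjoint hT.2.1 hN hTN).trans
          (centralizer_le (SetLike.coe_subset_coe.mpr (map_subtype_le M)))
      · have hTM : T.subgroupOf N ≤ centralizer M :=
          le_centralizer_of_disjoint (hT.2.1.subgroupOf N) hM.2.1
            (hdis.symm.mono_left (comap_mono hT.le_socle))
        simpa [subgroupOf_map_subtype, inf_eq_left.mpr hTN, coe_map] using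
          (map_mono hTM).trans (map_centralizer_le_centralizer_image (M : Set N) N.subtype)
    rw [← le_centralizer_iff, hG.centralizer_socle_eq_bot, le_bot_iff,
      map_eq_bot_iff_of_injective M N.subtype_injective] at hcent
    exact hM.1 hcent
  · exact map_le_iff_le_comap.mpr hle

theorem IsMinimalNormal.le_map_subtype_socle [Finite G] {N : Subgroup G} [N.Normal]
    {T : Subgroup G} (hT : IsMinimalNormal T) (hTN : T ≤ N) :
    T ≤ (socle N).map N.subtype := by
  rcases hT.disjoint_or_le (inferInstance : ((socle N).map N.subtype).Normal) with hdis | hle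
  · have hTN' : T.subgroupOf N ≠ ⊥ := by
      rw [Ne, subgroupOf_eq_bot]
      exact fun h => hT.1 (le_bot_iff.mp (h le_rfl hTN))
    obtain ⟨M, hM, hMT⟩ := (hT.2.1.subgroupOf N).exists_isMinimalNormal_le hTN'
    have hMbot : M.map N.subtype = ⊥ :=
      le_bot_iff.mp (hdis (map_le_iff_le_comap.mpr hMT) (map_mono hM.le_socle))
    exact absurd ((map_eq_bot_iff_of_injective M N.subtype_injective).mp hMbot) hM.1
  · exact hle

theorem socle_le_map_subtype_socle_sup_centralizer [Finite G] {N : Subgroup G} [N.Normal] :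
    socle G ≤ (socle N).map N.subtype ⊔ centralizer N :=
  socle_le fun T hT => by
    rcases hT.disjoint_or_le ‹N.Normal› with hTN | hTN
    · exact le_sup_of_le_right (le_centralizer_of_disjoint hT.2.1 ‹_› hTN)
    · exact le_sup_of_le_left (hT.le_map_subtype_socle hTN)

end

theorem stmt1 {G : Type*} [Group G] [Finite G] (hG : FittingFree G)
    (N : Subgroup G) (hN : N.Normal) :
    (socle ↥N).map N.subtype = socle G ⊓ N := by
  refine le_antisymm (le_inf ?_ (map_subtype_le _)) ?_
  · exact map_le_iff_le_comap.mpr <| socle_le fun M hM =>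
      map_le_iff_le_comap.mp (hM.map_subtype_le_socle hG hN)
  · calc socle G ⊓ N ≤ ((socle N).map N.subtype ⊔ centralizer N) ⊓ N :=
          inf_le_inf_right _ socle_le_map_subtype_socle_sup_centralizer
      _ ≤ (socle N).map N.subtype ⊔ centralizer N ⊓ N :=
          sup_inf_le_assoc_of_le_of_normal (map_subtype_le _)
      _ = (socle N).map N.subtype := by
          rw [inf_comm, hG.inf_centralizer_eq_bot hN, sup_bot_eq]
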